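/- Let q ≥ 1 and let f(s) := e^{e^{s^q}} for s > 0. Then lim_{s→∞} 1/B₁[f](s) = 1 and lim_{s→∞} 1/B₂[f](s) = 1; that is, the growth exponent of f is B = 1. -/

import Mathlib

open MeasureTheory Filter

/-- `Fint f s = ∫_s^∞ dτ / f(τ)`. -/
noncomputable def Fint (f : ℝ → ℝ) (s : ℝ) : ℝ := ∫ τ in Set.Ioi s, 1 / f τ

/-- `1/B₁[f](s) = (−log F(s))·(1 − f'(s)·F(s))`, with `G` playing the role of `F`. -/
noncomputable def invB1 (f G : ℝ → ℝ) (s : ℝ) : ℝ :=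
  (-Real.log (G s)) * (1 - deriv f s * G s)

/-- `1/B₂[f](s) = f'(s)·F(s)·(log F(s))²·(f(s)·f''(s)·F(s)/f'(s) − 1)`,
with `G` playing the role of `F`. -/
noncomputable def invB2 (f G : ℝ → ℝ) (s : ℝ) : ℝ :=
  deriv f s * G s * (Real.log (G s)) ^ 2 *
    (f s * deriv (deriv f) s * G s / deriv f s - 1)

/-- The model singular solution `v`. -/
noncomputable def modelv (B t : ℝ) : ℝ :=
  if B = 1 then Real.log (-2 * Real.log t) else (-2 * Real.log t) ^ ((B - 1) / B)

/-- The model nonlinearity `g`. -/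
noncomputable def modelg (B s : ℝ) : ℝ :=
  if B = 1 then 4 * Real.exp (Real.exp s - 2 * s)
  else (4 / (B * (B / (B - 1)))) * s ^ (1 - 2 * (B / (B - 1))) * Real.exp (s ^ (B / (B - 1)))

/-- The model function `G(s) = ∫_s^∞ dτ/g(τ)` in closed form. -/
noncomputable def modelG (B s : ℝ) : ℝ :=
  if B = 1 then (1 / 4) * (Real.exp s + 1) * Real.exp (-Real.exp s)
  else (B / 4) * (s ^ (B / (B - 1)) + 1) * Real.exp (-(s ^ (B / (B - 1))))

/-- The Emden–Fowler model profile `ψ`. -/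
noncomputable def modelpsi (B ρ : ℝ) : ℝ :=
  if B = 1 then Real.log (ρ - 1) else (ρ - 1) ^ ((B - 1) / B)

open Real Set Asymptotics Topology

/-!
Write `f = exp ∘ u` with `u s = exp (s ^ q)`, `w = u'` and `y = s ^ q`. Integrating by parts
against `w e^{-u}` twice gives `F = e^{-u}/w - ∫ C e^{-u}` and
`∫ C e^{-u} = C e^{-u}/w - ∫ H e^{-u}`, where `C = w'/w² = e^{-y} (1 + (q-1)/(q y))` and
`H = e^{-2y} (2 + O(1/y))`. Since `(φ / w)' = o(φ)` for each of these weights `φ`, the tail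
`∫ φ e^{-u}` is asymptotic to its boundary term `φ e^{-u} / w`, so `f' F = 1 - C + (2 + o(1)) e^{-2y}` with `u C → 1`.
This yields `u (1 - f' F) → 1` and `u² ((1 + C) f' F - 1) → 2 - 1 = 1`, and also
`-log F = u + log w - log (f' F) ~ u`; these are the factors of `1/B₁` and `1/B₂`, because
`f f'' F / f' = (1 + C) f' F`.
-/

theorem isLittleO_integral_Ioi {f g : ℝ → ℝ} (h : f =o[atTop] g) (hg : ∀ᶠ x in atTop, 0 ≤ g x)
    (hgi : ∀ᶠ a in atTop, IntegrableOn g (Ioi a)) :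
    (fun a => ∫ x in Ioi a, f x) =o[atTop] fun a => ∫ x in Ioi a, g x := by
  refine isLittleO_iff.2 fun ε hε => ?_
  obtain ⟨N, hN⟩ := eventually_atTop.1 ((h.bound hε).and hg)
  filter_upwards [hgi, eventually_ge_atTop N] with a hga haN
  have hg_nonneg : ∀ x ∈ Ioi a, 0 ≤ g x := fun x hx => (hN x (haN.trans hx.le)).2
  have hbound : ∀ᵐ x ∂volume.restrict (Ioi a), ‖f x‖ ≤ ε * g x := by
    refine (ae_restrict_iff' measurableSet_Ioi).2 (ae_of_all _ fun x hx => ?_)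
    simpa [Real.norm_of_nonneg (hg_nonneg x hx)] using (hN x (haN.trans hx.le)).1
  calc ‖∫ x in Ioi a, f x‖ ≤ ∫ x in Ioi a, ε * g x :=
        norm_integral_le_of_norm_le (hga.const_mul ε) hbound
    _ = ε * ‖∫ x in Ioi a, g x‖ := by
        rw [integral_const_mul, Real.norm_of_nonneg (setIntegral_nonneg measurableSet_Ioi hg_nonneg)]

/-- Hypotheses under which the tail integral `∫ₛ^∞ φ e^{-u}` is asymptotic to its first
integration-by-parts term `φ e^{-u} / w`, where `w = u'` and `ψ = (φ / w)'`. -/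
structure LaplaceTail (u w φ ψ : ℝ → ℝ) : Prop where
  hasDerivAt_u : ∀ᶠ x in atTop, HasDerivAt u (w x) x
  hasDerivAt_div : ∀ᶠ x in atTop, HasDerivAt (fun τ => φ τ / w τ) (ψ x) x
  ne_zero : ∀ᶠ x in atTop, w x ≠ 0
  continuousAt : ∀ᶠ x in atTop, ContinuousAt φ x
  pos : ∀ᶠ x in atTop, 0 < φ x
  isLittleO : ψ =o[atTop] φ
  tendsto_boundary : Tendsto (fun x => φ x / w x * exp (-u x)) atTop (𝓝 0)

namespace LaplaceTail

variable {u w φ ψ : ℝ → ℝ} (h : LaplaceTail u w φ ψ)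
include h

theorem hasDerivAt_boundary : ∀ᶠ x in atTop, HasDerivAt (fun x => φ x / w x * exp (-u x))
    (ψ x * exp (-u x) - φ x * exp (-u x)) x := by
  filter_upwards [h.hasDerivAt_u, h.hasDerivAt_div, h.ne_zero] with x hu hφ hw
  refine (hφ.mul hu.neg.exp).congr_deriv ?_
  simp only [Pi.neg_apply]
  field_simp
  ring

/-- The boundary term is eventually decreasing, which makes its derivative, and hence
`φ e^{-u} ≤ 2 |(φ e^{-u} / w)'|`, integrable. -/
theorem eventually_integrableOn : ∀ᶠ a in atTop,
    IntegrableOn (fun x => φ x * exp (-u x)) (Ioi a) ∧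
      IntegrableOn (fun x => ψ x * exp (-u x)) (Ioi a) := by
  have hhalf : ∀ᶠ x in atTop, ψ x ≤ φ x / 2 := by
    filter_upwards [h.isLittleO.bound (by norm_num : (0 : ℝ) < 1 / 2), h.pos] with x hx hφ
    rw [Real.norm_eq_abs, Real.norm_of_nonneg hφ.le] at hx
    linarith [le_abs_self (ψ x)]
  obtain ⟨N, hN⟩ := eventually_atTop.1 (h.hasDerivAt_boundary.and (hhalf.and
    (h.pos.and (h.continuousAt.and h.hasDerivAt_u))))
  filter_upwards [eventually_ge_atTop N] with a ha
  have hN' : ∀ x ∈ Ioi a, _ := fun x (hx : a < x) => hN x (ha.trans hx.le)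
  have hderiv : IntegrableOn (fun x => ψ x * exp (-u x) - φ x * exp (-u x)) (Ioi a) := by
    refine integrableOn_Ioi_deriv_of_nonpos' (fun x hx => (hN x (ha.trans hx)).1)
      (fun x hx => ?_) h.tendsto_boundary
    obtain ⟨-, hψx, hφx, -⟩ := hN' x hx
    nlinarith [exp_pos (-u x)]
  have hφi : IntegrableOn (fun x => φ x * exp (-u x)) (Ioi a) := by
    refine (hderiv.norm.const_mul 2).mono' ?_ ?_
    · refine ContinuousOn.aestronglyMeasurable (fun x hx => ?_) measurableSet_Ioi
      obtain ⟨-, -, -, hφc, hu⟩ := hN' x hx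
      exact (hφc.mul hu.continuousAt.neg.rexp).continuousWithinAt
    · refine (ae_restrict_iff' measurableSet_Ioi).2 (ae_of_all _ fun x hx => ?_)
      obtain ⟨-, hψx, hφx, -⟩ := hN' x hx
      rw [Real.norm_eq_abs, Real.norm_eq_abs, ← sub_mul, abs_mul, abs_mul, abs_of_pos (exp_pos _),
        abs_of_pos hφx, abs_of_neg (by linarith)]
      nlinarith [exp_pos (-u x)]
  exact ⟨hφi, (hderiv.add hφi).congr_fun (fun x _ => by simp) measurableSet_Ioi⟩

theorem integral_eq : ∀ᶠ a in atTop, ∫ x in Ioi a, φ x * exp (-u x) =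
    φ a / w a * exp (-u a) + ∫ x in Ioi a, ψ x * exp (-u x) := by
  obtain ⟨N, hN⟩ := eventually_atTop.1 h.hasDerivAt_boundary
  filter_upwards [h.eventually_integrableOn, eventually_ge_atTop N] with a ⟨hφi, hψi⟩ ha
  have := integral_Ioi_of_hasDerivAt_of_tendsto' (fun x hx => hN x (ha.trans hx))
    (hψi.sub hφi) h.tendsto_boundary
  rw [integral_sub hψi hφi] at this
  linarith

theorem isEquivalent : (fun a => ∫ x in Ioi a, φ x * exp (-u x)) ~[atTop]
    fun a => φ a / w a * exp (-u a) := by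
  have hψφ : (fun x => ψ x * exp (-u x)) =o[atTop] fun x => φ x * exp (-u x) :=
    h.isLittleO.mul_isBigO (isBigO_refl _ _)
  have hJ := isLittleO_integral_Ioi hψφ (h.pos.mono fun x hx => by positivity)
    (h.eventually_integrableOn.mono fun _ hi => hi.1)
  refine (IsLittleO.isEquivalent (hJ.neg_left.congr' ?_ EventuallyEq.rfl)).symm
  filter_upwards [h.integral_eq] with a ha
  simp [ha]

theorem isEquivalent_mul_integral : (fun a => w a * exp (u a) * ∫ x in Ioi a, φ x * exp (-u x))
    ~[atTop] φ := by
  refine (IsEquivalent.refl.mul h.isEquivalent).congr_right ?_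
  filter_upwards [h.ne_zero] with a ha
  simp only [Pi.mul_apply, exp_neg]
  field_simp

theorem mul_integral_eq : ∀ᶠ a in atTop, w a * exp (u a) * ∫ x in Ioi a, φ x * exp (-u x) =
    φ a + w a * exp (u a) * ∫ x in Ioi a, ψ x * exp (-u x) := by
  filter_upwards [h.integral_eq, h.ne_zero] with a ha hw
  rw [ha, exp_neg]
  field_simp

end LaplaceTail

namespace IteratedExp

section Profiles

/- In the variable `y = s ^ q`: `C q (s ^ q) = w'/w²` and `H q (s ^ q) = -(C q (τ ^ q) / w τ)'` at
`τ = s`, the weights produced by successive integrations by parts; `dB q = (B q)'`. -/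

noncomputable def A (q y : ℝ) : ℝ := 1 + (q - 1) / q / y

noncomputable def B (q y : ℝ) : ℝ := A q y + A q y ^ 2 + (q - 1) / q / y ^ 2

noncomputable def dB (q y : ℝ) : ℝ :=
  -((q - 1) / q / y ^ 2) * (1 + 2 * A q y) - 2 * ((q - 1) / q) / y ^ 3

noncomputable def C (q y : ℝ) : ℝ := exp (-y) * A q y

noncomputable def H (q y : ℝ) : ℝ := exp (-y) ^ 2 * B q y

variable (q : ℝ) {y : ℝ}

theorem hasDerivAt_A (hy : y ≠ 0) : HasDerivAt (A q) (-((q - 1) / q / y ^ 2)) y := by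
  have := ((hasDerivAt_id y).inv hy).const_mul ((q - 1) / q) |>.const_add 1
  refine this.congr_deriv ?_
  simp only [id]
  ring

theorem hasDerivAt_B (hy : y ≠ 0) : HasDerivAt (B q) (dB q y) y := by
  have hA := hasDerivAt_A q hy
  have := (hA.add (hA.pow 2)).add
    ((hasDerivAt_const y ((q - 1) / q)).div (hasDerivAt_pow 2 y) (pow_ne_zero 2 hy))
  refine this.congr_deriv ?_
  simp only [dB]
  field_simp
  ring

theorem hasDerivAt_C (hy : y ≠ 0) :
    HasDerivAt (C q) (exp (-y) * (-((q - 1) / q / y ^ 2) - A q y)) y := by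
  refine ((hasDerivAt_neg y).exp.mul (hasDerivAt_A q hy)).congr_deriv ?_
  ring

theorem hasDerivAt_H (hy : y ≠ 0) :
    HasDerivAt (H q) (exp (-y) ^ 2 * (dB q y - 2 * B q y)) y := by
  refine (((hasDerivAt_neg y).exp.pow 2).mul (hasDerivAt_B q hy)).congr_deriv ?_
  simp only [Pi.pow_apply]
  ring

theorem tendsto_A : Tendsto (A q) atTop (𝓝 1) := by
  have h1 : Tendsto (fun y : ℝ => (q - 1) / q / y) atTop (𝓝 0) :=
    tendsto_const_nhds.div_atTop tendsto_id
  have := h1.const_add 1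
  rwa [add_zero] at this

theorem tendsto_B : Tendsto (B q) atTop (𝓝 2) := by
  have h2 : Tendsto (fun y : ℝ => (q - 1) / q / y ^ 2) atTop (𝓝 0) :=
    tendsto_const_nhds.div_atTop (tendsto_pow_atTop two_ne_zero)
  show Tendsto (fun y => A q y + A q y ^ 2 + (q - 1) / q / y ^ 2) atTop (𝓝 2)
  convert ((tendsto_A q).add ((tendsto_A q).pow 2)).add h2
  norm_num

theorem tendsto_dB : Tendsto (dB q) atTop (𝓝 0) := by
  have h2 : Tendsto (fun y : ℝ => (q - 1) / q / y ^ 2) atTop (𝓝 0) :=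
    tendsto_const_nhds.div_atTop (tendsto_pow_atTop two_ne_zero)
  have h3 : Tendsto (fun y : ℝ => 2 * ((q - 1) / q) / y ^ 3) atTop (𝓝 0) :=
    tendsto_const_nhds.div_atTop (tendsto_pow_atTop three_ne_zero)
  show Tendsto (fun y => -((q - 1) / q / y ^ 2) * (1 + 2 * A q y) - 2 * ((q - 1) / q) / y ^ 3)
    atTop (𝓝 0)
  simpa using (h2.neg.mul (tendsto_const_nhds.add ((tendsto_A q).const_mul 2))).sub h3

theorem tendsto_C : Tendsto (C q) atTop (𝓝 0) := by
  show Tendsto (fun y => exp (-y) * A q y) atTop (𝓝 0)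
  simpa using tendsto_exp_neg_atTop_nhds_zero.mul (tendsto_A q)

theorem tendsto_H : Tendsto (H q) atTop (𝓝 0) := by
  show Tendsto (fun y => exp (-y) ^ 2 * B q y) atTop (𝓝 0)
  simpa using (tendsto_exp_neg_atTop_nhds_zero.pow 2).mul (tendsto_B q)

theorem exp_mul_C (y : ℝ) : exp y * C q y = A q y := by
  rw [C, ← mul_assoc, ← exp_add, add_neg_cancel, exp_zero, one_mul]

theorem exp_sq_mul_H (y : ℝ) : exp y ^ 2 * H q y = B q y := by
  rw [H, ← mul_assoc, ← mul_pow, ← exp_add, add_neg_cancel, exp_zero, one_pow, one_mul]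

theorem eventually_A_pos : ∀ᶠ y in atTop, 0 < A q y :=
  (tendsto_A q).eventually (eventually_gt_nhds one_pos)

theorem eventually_B_pos : ∀ᶠ y in atTop, 0 < B q y :=
  (tendsto_B q).eventually (eventually_gt_nhds two_pos)

theorem eventually_C_pos : ∀ᶠ y in atTop, 0 < C q y :=
  (eventually_A_pos q).mono fun _ hy => mul_pos (exp_pos _) hy

theorem eventually_H_pos : ∀ᶠ y in atTop, 0 < H q y :=
  (eventually_B_pos q).mono fun _ hy => mul_pos (pow_pos (exp_pos _) 2) hy

theorem isLittleO_H_C : H q =o[atTop] C q := by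
  refine (isLittleO_iff_tendsto' ((eventually_C_pos q).mono fun y hy h0 => (hy.ne' h0).elim)).2 ?_
  have := tendsto_exp_neg_atTop_nhds_zero.mul ((tendsto_B q).div (tendsto_A q) one_ne_zero)
  rw [zero_mul] at this
  refine this.congr' ?_
  filter_upwards [eventually_A_pos q] with y hA
  simp only [C, H, Pi.div_apply]
  field_simp

theorem isLittleO_H_next :
    (fun y => exp (-y) * (exp (-y) ^ 2 * (dB q y - 2 * B q y)) - C q y * H q y) =o[atTop] H q := by
  refine (isLittleO_iff_tendsto' ((eventually_H_pos q).mono fun y hy h0 => (hy.ne' h0).elim)).2 ?_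
  have := tendsto_exp_neg_atTop_nhds_zero.mul
    ((((tendsto_dB q).sub ((tendsto_B q).const_mul 2)).div (tendsto_B q) two_ne_zero).sub (tendsto_A q))
  rw [zero_mul] at this
  refine this.congr' ?_
  filter_upwards [eventually_B_pos q] with y hB
  simp only [C, H, Pi.div_apply]
  field_simp

end Profiles

noncomputable def w (q s : ℝ) : ℝ := q * s ^ q / s * exp (s ^ q)

noncomputable def F (q s : ℝ) : ℝ := ∫ τ in Ioi s, exp (-exp (τ ^ q))

/-- `normTail q Φ s = f'(s) ∫ₛ^∞ Φ(τ^q) / f(τ) dτ`. -/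
noncomputable def normTail (q : ℝ) (Φ : ℝ → ℝ) (s : ℝ) : ℝ :=
  w q s * exp (exp (s ^ q)) * ∫ τ in Ioi s, Φ (τ ^ q) * exp (-exp (τ ^ q))

variable {q s : ℝ}

theorem hasDerivAt_rpow (hs : 0 < s) : HasDerivAt (fun x => x ^ q) (q * s ^ q / s) s := by
  simpa [Real.rpow_sub_one hs.ne', mul_div_assoc] using
    Real.hasDerivAt_rpow_const (p := q) (Or.inl hs.ne')

theorem hasDerivAt_exp_rpow (hs : 0 < s) : HasDerivAt (fun x => exp (x ^ q)) (w q s) s := by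
  refine (hasDerivAt_rpow hs).exp.congr_deriv ?_
  rw [w]
  ring

theorem w_pos (hq : 0 < q) (hs : 0 < s) : 0 < w q s := by
  unfold w
  positivity

theorem hasDerivAt_w (hq : q ≠ 0) (hs : 0 < s) : HasDerivAt (w q) (w q s ^ 2 * C q (s ^ q)) s := by
  have hy := hasDerivAt_rpow (q := q) hs
  refine (((hy.const_mul q).div (hasDerivAt_id s) hs.ne').mul hy.exp).congr_deriv ?_
  simp only [w, C, A, id, exp_neg, Pi.div_apply]
  field_simp
  ring

theorem hasDerivAt_comp_rpow_div_w (hq : 0 < q) (hs : 0 < s) {Φ : ℝ → ℝ} {Φ' : ℝ}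
    (hΦ : HasDerivAt Φ Φ' (s ^ q)) :
    HasDerivAt (fun x => Φ (x ^ q) / w q x) (exp (-s ^ q) * Φ' - C q (s ^ q) * Φ (s ^ q)) s := by
  refine ((hΦ.comp s (hasDerivAt_rpow hs)).div (hasDerivAt_w hq.ne' hs)
    (w_pos hq hs).ne').congr_deriv ?_
  simp only [w, exp_neg, Function.comp_def]
  field_simp

theorem log_w (hq : 0 < q) (hs : 0 < s) :
    log (w q s) = s ^ q + (log q + (1 - 1 / q) * log (s ^ q)) := by
  have hy : 0 < s ^ q := Real.rpow_pos_of_pos hs q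
  rw [w, log_mul (by positivity) (exp_pos _).ne', log_exp, log_div (by positivity) hs.ne',
    log_mul hq.ne' hy.ne', Real.log_rpow hs]
  field_simp
  ring

theorem isEquivalent_log_w (hq : 0 < q) : (fun s => log (w q s)) ~[atTop] fun s => s ^ q := by
  have ho : (fun y => log q + (1 - 1 / q) * log y) =o[atTop] id :=
    (isLittleO_const_id_atTop _).add (isLittleO_log_id_atTop.const_mul_left _)
  refine ((IsEquivalent.refl.add_isLittleO ho).comp_tendsto (tendsto_rpow_atTop hq)).congr_left ?_
  filter_upwards [eventually_gt_atTop 0] with s hs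
  simp [log_w hq hs]

theorem tendsto_w (hq : 0 < q) : Tendsto (w q) atTop atTop := by
  refine (tendsto_exp_atTop.comp ((isEquivalent_log_w hq).symm.tendsto_atTop
    (tendsto_rpow_atTop hq))).congr' ?_
  filter_upwards [eventually_gt_atTop 0] with s hs
  exact exp_log (w_pos hq hs)

theorem tendsto_log_w_div (hq : 0 < q) :
    Tendsto (fun s => log (w q s) / exp (s ^ q)) atTop (𝓝 0) := by
  have h : (fun s : ℝ => s ^ q) =o[atTop] fun s => exp (s ^ q) := by
    simpa [Function.comp_def] using
      (isLittleO_pow_exp_atTop (n := 1)).comp_tendsto (tendsto_rpow_atTop hq)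
  exact ((isEquivalent_log_w hq).isBigO.trans_isLittleO h).tendsto_div_nhds_zero

theorem laplaceTail_comp_rpow (hq : 0 < q) {Φ Φ' Ψ : ℝ → ℝ} {L : ℝ}
    (hΦ : ∀ᶠ y in atTop, HasDerivAt Φ (Φ' y) y) (hΨ : ∀ y, Ψ y = exp (-y) * Φ' y - C q y * Φ y)
    (hpos : ∀ᶠ y in atTop, 0 < Φ y) (hlim : Tendsto Φ atTop (𝓝 L)) (ho : Ψ =o[atTop] Φ) :
    LaplaceTail (fun s => exp (s ^ q)) (w q) (fun s => Φ (s ^ q)) (fun s => Ψ (s ^ q)) where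
  hasDerivAt_u := (eventually_gt_atTop 0).mono fun _ hs => hasDerivAt_exp_rpow hs
  hasDerivAt_div := by
    filter_upwards [eventually_gt_atTop 0, (tendsto_rpow_atTop hq).eventually hΦ] with s hs hΦs
    rw [hΨ]
    exact hasDerivAt_comp_rpow_div_w hq hs hΦs
  ne_zero := (eventually_gt_atTop 0).mono fun _ hs => (w_pos hq hs).ne'
  continuousAt := by
    filter_upwards [eventually_gt_atTop 0, (tendsto_rpow_atTop hq).eventually hΦ] with s hs hΦs
    exact hΦs.continuousAt.comp (f := fun x => x ^ q) (hasDerivAt_rpow hs).continuousAt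
  pos := (tendsto_rpow_atTop hq).eventually hpos
  isLittleO := ho.comp_tendsto (tendsto_rpow_atTop hq)
  tendsto_boundary := by
    have := ((hlim.comp (tendsto_rpow_atTop hq)).mul (tendsto_w hq).inv_tendsto_atTop).mul
      (tendsto_exp_neg_atTop_nhds_zero.comp (tendsto_exp_atTop.comp (tendsto_rpow_atTop hq)))
    simpa [div_eq_mul_inv] using this

theorem laplaceTail_one (hq : 0 < q) :
    LaplaceTail (fun s => exp (s ^ q)) (w q) (fun _ => 1) (fun s => -C q (s ^ q)) :=
  laplaceTail_comp_rpow hq (Φ' := fun _ => 0) (Ψ := fun y => -C q y)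
    (.of_forall fun y => hasDerivAt_const y 1) (fun _ => by ring) (.of_forall fun _ => one_pos) tendsto_const_nhds
    ((isLittleO_one_iff ℝ).2 (by simpa using (tendsto_C q).neg))

theorem laplaceTail_C (hq : 0 < q) :
    LaplaceTail (fun s => exp (s ^ q)) (w q) (fun s => C q (s ^ q)) (fun s => -H q (s ^ q)) :=
  laplaceTail_comp_rpow hq ((eventually_ne_atTop 0).mono fun _ hy => hasDerivAt_C q hy)
    (fun _ => by simp only [C, H, B]; ring) (eventually_C_pos q) (tendsto_C q)
    (isLittleO_H_C q).neg_left

theorem laplaceTail_H (hq : 0 < q) :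
    LaplaceTail (fun s => exp (s ^ q)) (w q) (fun s => H q (s ^ q)) (fun s =>
      exp (-s ^ q) * (exp (-s ^ q) ^ 2 * (dB q (s ^ q) - 2 * B q (s ^ q))) -
        C q (s ^ q) * H q (s ^ q)) :=
  laplaceTail_comp_rpow hq ((eventually_ne_atTop 0).mono fun _ hy => hasDerivAt_H q hy)
    (fun _ => rfl) (eventually_H_pos q) (tendsto_H q) (isLittleO_H_next q)

theorem normTail_one_eq (hq : 0 < q) :
    ∀ᶠ s in atTop, w q s * exp (exp (s ^ q)) * F q s = 1 - normTail q (C q) s := by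
  filter_upwards [(laplaceTail_one hq).mul_integral_eq] with s hs
  simp only [one_mul, neg_mul, integral_neg] at hs
  rw [F, hs, normTail]
  ring

theorem normTail_C_eq (hq : 0 < q) :
    ∀ᶠ s in atTop, normTail q (C q) s = C q (s ^ q) - normTail q (H q) s := by
  filter_upwards [(laplaceTail_C hq).mul_integral_eq] with s hs
  simp only [neg_mul, integral_neg] at hs
  rw [normTail, hs, normTail]
  ring

theorem tendsto_normTail_C (hq : 0 < q) : Tendsto (normTail q (C q)) atTop (𝓝 0) :=
  (laplaceTail_C hq).isEquivalent_mul_integral.symm.tendsto_nhds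
    ((tendsto_C q).comp (tendsto_rpow_atTop hq))

theorem tendsto_exp_mul_normTail_C (hq : 0 < q) :
    Tendsto (fun s => exp (s ^ q) * normTail q (C q) s) atTop (𝓝 1) := by
  refine (IsEquivalent.refl.mul (laplaceTail_C hq).isEquivalent_mul_integral).symm.tendsto_nhds ?_
  show Tendsto (fun s => exp (s ^ q) * C q (s ^ q)) atTop (𝓝 1)
  simpa [Function.comp_def, exp_mul_C] using (tendsto_A q).comp (tendsto_rpow_atTop hq)

theorem tendsto_exp_sq_mul_normTail_H (hq : 0 < q) :
    Tendsto (fun s => exp (s ^ q) ^ 2 * normTail q (H q) s) atTop (𝓝 2) := by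
  refine (IsEquivalent.refl.mul (laplaceTail_H hq).isEquivalent_mul_integral).symm.tendsto_nhds ?_
  show Tendsto (fun s => exp (s ^ q) ^ 2 * H q (s ^ q)) atTop (𝓝 2)
  simpa [Function.comp_def, exp_sq_mul_H] using (tendsto_B q).comp (tendsto_rpow_atTop hq)

theorem tendsto_mul_F (hq : 0 < q) :
    Tendsto (fun s => w q s * exp (exp (s ^ q)) * F q s) atTop (𝓝 1) := by
  have := (tendsto_normTail_C hq).const_sub 1
  rw [sub_zero] at this
  refine this.congr' ?_
  filter_upwards [normTail_one_eq hq] with s hs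
  rw [hs]

theorem tendsto_exp_mul_one_sub_mul_F (hq : 0 < q) :
    Tendsto (fun s => exp (s ^ q) * (1 - w q s * exp (exp (s ^ q)) * F q s)) atTop (𝓝 1) := by
  refine (tendsto_exp_mul_normTail_C hq).congr' ?_
  filter_upwards [normTail_one_eq hq] with s hs
  rw [hs, sub_sub_cancel]

theorem tendsto_exp_sq_mul_sub_one (hq : 0 < q) :
    Tendsto (fun s => exp (s ^ q) ^ 2 *
      ((1 + C q (s ^ q)) * (w q s * exp (exp (s ^ q)) * F q s) - 1)) atTop (𝓝 1) := by
  have := ((((tendsto_C q).comp (tendsto_rpow_atTop hq)).const_add 1).mul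
    (tendsto_exp_sq_mul_normTail_H hq)).sub (((tendsto_A q).comp (tendsto_rpow_atTop hq)).pow 2)
  rw [show ((1 : ℝ) + 0) * 2 - 1 ^ 2 = 1 by norm_num] at this
  refine this.congr' ?_
  filter_upwards [normTail_one_eq hq, normTail_C_eq hq] with s h1 h2
  simp only [Function.comp_apply, ← exp_mul_C q (s ^ q)]
  rw [h1, h2]
  ring

theorem tendsto_neg_log_F_div (hq : 0 < q) :
    Tendsto (fun s => -log (F q s) / exp (s ^ q)) atTop (𝓝 1) := by
  have hlog := (tendsto_mul_F hq).log one_ne_zero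
  rw [log_one] at hlog
  have := (tendsto_log_w_div hq).const_add 1 |>.sub
    (hlog.mul (tendsto_exp_atTop.comp (tendsto_rpow_atTop hq)).inv_tendsto_atTop)
  rw [mul_zero, add_zero, sub_zero] at this
  refine this.congr' ?_
  filter_upwards [(tendsto_mul_F hq).eventually (eventually_gt_nhds one_pos),
    eventually_gt_atTop 0] with s hG hs
  have hF : 0 < F q s := pos_of_mul_pos_right hG (by positivity [w_pos hq hs])
  simp only [Pi.inv_apply, Function.comp_apply]
  rw [log_mul (by positivity [w_pos hq hs]) hF.ne',
    log_mul (w_pos hq hs).ne' (exp_pos _).ne', log_exp]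
  field_simp
  ring

theorem deriv_exp_exp_rpow (hs : 0 < s) :
    deriv (fun x => exp (exp (x ^ q))) s = w q s * exp (exp (s ^ q)) := by
  rw [(hasDerivAt_exp_rpow hs).exp.deriv, mul_comm]

theorem deriv_deriv_exp_exp_rpow (hq : q ≠ 0) (hs : 0 < s) :
    deriv (deriv fun x => exp (exp (x ^ q))) s =
      exp (exp (s ^ q)) * w q s ^ 2 * (1 + C q (s ^ q)) := by
  have h : deriv (fun x => exp (exp (x ^ q))) =ᶠ[𝓝 s] fun x => w q x * exp (exp (x ^ q)) :=
    eventually_of_mem (Ioi_mem_nhds hs) fun x hx => deriv_exp_exp_rpow hx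
  rw [h.deriv_eq]
  exact ((hasDerivAt_w hq hs).mul (hasDerivAt_exp_rpow hs).exp).deriv.trans (by ring)

end IteratedExp

open IteratedExp

/-- Example 3.4: for `f(s) = e^{e^{s^q}}` with `q ≥ 1`, both `1/B₁[f](s)` and
`1/B₂[f](s)` tend to `1` as `s → ∞`; i.e. the growth exponent is `B = 1`. -/
theorem stmt19 (q : ℝ) (hq : 1 ≤ q) :
    Tendsto (fun s => invB1 (fun x => Real.exp (Real.exp (x ^ q)))
        (Fint (fun x => Real.exp (Real.exp (x ^ q)))) s) atTop (nhds 1)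
    ∧ Tendsto (fun s => invB2 (fun x => Real.exp (Real.exp (x ^ q)))
        (Fint (fun x => Real.exp (Real.exp (x ^ q)))) s) atTop (nhds 1) := by
  have hq0 : 0 < q := by linarith
  have hF : Fint (fun x => exp (exp (x ^ q))) = F q := funext fun s => by simp [Fint, F, exp_neg]
  rw [hF]
  constructor
  · have := (tendsto_neg_log_F_div hq0).mul (tendsto_exp_mul_one_sub_mul_F hq0)
    rw [one_mul] at this
    refine this.congr' ?_
    filter_upwards [eventually_gt_atTop 0] with s hs
    rw [invB1, deriv_exp_exp_rpow hs]
    field_simp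
  · have := ((tendsto_mul_F hq0).mul ((tendsto_neg_log_F_div hq0).pow 2)).mul
      (tendsto_exp_sq_mul_sub_one hq0)
    rw [one_pow, one_mul, one_mul] at this
    refine this.congr' ?_
    filter_upwards [eventually_gt_atTop 0] with s hs
    rw [invB2, deriv_deriv_exp_exp_rpow hq0.ne' hs, deriv_exp_exp_rpow hs]
    have := w_pos hq0 hs
    field_simp
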